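/- Let $k$ be a field, $R = k[x,y]$, and $M = (R^2/\langle x e_1 - y e_0\rangle) \oplus R$. Then the cokernel of the natural evaluation map $M \to M^{\vee\vee}$ has $k$-dimension $1$. -/

import Mathlib

/-!
Write `R = k[x,y]` and `N = R²/(x e₁ - y e₀)`. Since `x, y` is a regular sequence, every
functional on `N` is a multiple of `δ : v ↦ x v₀ + y v₁`, so `N^∨ ≅ R` with generator `δ`, just as
`R^∨ ≅ R` with generator `id`. Dualising these identifications turns `M^∨∨` into `R × R` and the
evaluation map into `δ × id`, whose cokernel is `R/(x, y) ≅ k`.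
-/

open MvPolynomial

/-- The Koszul relation element `x • e₁ - y • e₀` in `R² = Fin 2 → k[x,y]`. -/
noncomputable def koszulRel (k : Type*) [Field k] : Fin 2 → MvPolynomial (Fin 2) k :=
  (X 0 : MvPolynomial (Fin 2) k) • (Pi.single 1 1 : Fin 2 → MvPolynomial (Fin 2) k)
    - (X 1 : MvPolynomial (Fin 2) k) • (Pi.single 0 1 : Fin 2 → MvPolynomial (Fin 2) k)

/-- `M = (R²/(x e₁ - y e₀)) ⊕ R`. -/
abbrev Mmod (k : Type*) [Field k] :=
  (((Fin 2 → MvPolynomial (Fin 2) k) ⧸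
      Submodule.span (MvPolynomial (Fin 2) k) {koszulRel k}) × MvPolynomial (Fin 2) k)

open Module Function

noncomputable def Submodule.prodTopQuotientEquiv {R M₁ M₂ : Type*} [Ring R] [AddCommGroup M₁]
    [Module R M₁] [AddCommGroup M₂] [Module R M₂] (p : Submodule R M₁) :
    ((M₁ × M₂) ⧸ p.prod (⊤ : Submodule R M₂)) ≃ₗ[R] M₁ ⧸ p :=
  Submodule.quotEquivOfEq _ _ (by rw [LinearMap.ker_comp, Submodule.ker_mkQ, Submodule.comap_fst])
    ≪≫ₗ (p.mkQ ∘ₗ LinearMap.fst R M₁ M₂).quotKerEquivOfSurjective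
      ((Submodule.mkQ_surjective p).comp Prod.fst_surjective)

section DualGenerator

variable {R : Type*} [CommRing R]

lemma bijective_toSpanSingleton_id :
    Bijective (LinearMap.toSpanSingleton R (Dual R R) LinearMap.id) := by
  refine ⟨fun c d h => by simpa using LinearMap.congr_fun h 1, fun f => ⟨f 1, ?_⟩⟩
  ext
  simp

variable {N N₁ N₂ : Type*} [AddCommGroup N] [Module R N] [AddCommGroup N₁] [Module R N₁]
  [AddCommGroup N₂] [Module R N₂]

noncomputable def dualDualEquivOfGenerator (δ : Dual R N)
    (hδ : Bijective (LinearMap.toSpanSingleton R (Dual R N) δ)) :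
    Dual R (Dual R N) ≃ₗ[R] R :=
  (LinearEquiv.ofBijective _ hδ).dualMap ≪≫ₗ LinearMap.ringLmapEquivSelf R R R

@[simp]
lemma dualDualEquivOfGenerator_apply (δ : Dual R N)
    (hδ : Bijective (LinearMap.toSpanSingleton R (Dual R N) δ)) (ψ : Dual R (Dual R N)) :
    dualDualEquivOfGenerator δ hδ ψ = ψ δ := by
  simp [dualDualEquivOfGenerator]

variable (R N₁ N₂) in
noncomputable def dualDualProdEquiv :
    Dual R (Dual R (N₁ × N₂)) ≃ₗ[R] Dual R (Dual R N₁) × Dual R (Dual R N₂) :=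
  (dualProdDualEquivDual R N₁ N₂).dualMap ≪≫ₗ
    (dualProdDualEquivDual R (Dual R N₁) (Dual R N₂)).symm

noncomputable def evalCokernelProdEquiv (δ₁ : Dual R N₁) (δ₂ : Dual R N₂)
    (h₁ : Bijective (LinearMap.toSpanSingleton R (Dual R N₁) δ₁))
    (h₂ : Bijective (LinearMap.toSpanSingleton R (Dual R N₂) δ₂)) :
    (Dual R (Dual R (N₁ × N₂)) ⧸ LinearMap.range (Dual.eval R (N₁ × N₂)))
      ≃ₗ[R] (R × R) ⧸ (LinearMap.range δ₁).prod (LinearMap.range δ₂) :=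
  let Φ := dualDualProdEquiv R N₁ N₂ ≪≫ₗ
    (dualDualEquivOfGenerator δ₁ h₁).prodCongr (dualDualEquivOfGenerator δ₂ h₂)
  have hΦ : Φ.toLinearMap ∘ₗ Dual.eval R (N₁ × N₂) = δ₁.prodMap δ₂ := by
    ext <;> simp [Φ, dualDualProdEquiv]
  Submodule.Quotient.equiv _ _ Φ <| by
    rw [← LinearMap.range_comp, hΦ, LinearMap.range_prodMap]

end DualGenerator

section Koszul

variable {R : Type*} [CommRing R] (a b : R)

abbrev KoszulQuotient :=
  (Fin 2 → R) ⧸ Submodule.span R {a • (Pi.single 1 1 : Fin 2 → R) - b • Pi.single 0 1}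

noncomputable def koszulForm : Dual R (KoszulQuotient a b) :=
  Submodule.liftQ _ (a • LinearMap.proj 0 + b • LinearMap.proj 1) <| by
    rw [Submodule.span_le, Set.singleton_subset_iff, SetLike.mem_coe, LinearMap.mem_ker]
    simp [mul_comm]

@[simp]
lemma koszulForm_mk (v : Fin 2 → R) :
    koszulForm a b (Submodule.Quotient.mk v) = a * v 0 + b * v 1 := by
  simp [koszulForm]

lemma range_koszulForm : LinearMap.range (koszulForm a b) = Ideal.span {a, b} := by
  ext p
  rw [Ideal.span, Submodule.mem_span_pair, LinearMap.range_eq_map, ← Submodule.range_mkQ,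
    ← LinearMap.range_comp]
  constructor
  · rintro ⟨v, rfl⟩
    exact ⟨v 0, v 1, by simp [mul_comm]⟩
  · rintro ⟨c, d, rfl⟩
    exact ⟨![c, d], by simp [mul_comm]⟩

variable {a b}

lemma bijective_toSpanSingleton_koszulForm (ha : IsLeftRegular a)
    (hb : ∀ p, a ∣ b * p → a ∣ p) :
    Bijective (LinearMap.toSpanSingleton R (Dual R (KoszulQuotient a b)) (koszulForm a b)) := by
  refine ⟨fun c d h => ?_, fun φ => ?_⟩
  · have h₀ := LinearMap.congr_fun h (Submodule.Quotient.mk (Pi.single 0 1))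
    simp only [LinearMap.toSpanSingleton_apply, LinearMap.smul_apply, koszulForm_mk,
      Pi.single_eq_same, Pi.single_eq_of_ne (by decide : (1 : Fin 2) ≠ 0), smul_eq_mul,
      mul_one, mul_zero, add_zero] at h₀
    exact ha (by simpa [mul_comm] using h₀)
  · set p := φ (Submodule.Quotient.mk (Pi.single 0 1))
    set q := φ (Submodule.Quotient.mk (Pi.single 1 1))
    have hrel : a * q = b * p := by
      have h₀ : φ (Submodule.Quotient.mk (a • Pi.single 1 1 - b • Pi.single 0 1)) = 0 := by
        rw [(Submodule.Quotient.mk_eq_zero _).2 (Submodule.mem_span_singleton_self _), map_zero]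
      rwa [Submodule.Quotient.mk_sub, Submodule.Quotient.mk_smul, Submodule.Quotient.mk_smul,
        map_sub, map_smul, map_smul, smul_eq_mul, smul_eq_mul, sub_eq_zero] at h₀
    obtain ⟨c, hc⟩ := hb p (hrel ▸ dvd_mul_right a q)
    have hq : q = b * c := ha (show a * q = a * (b * c) by rw [hrel, hc]; ring)
    refine ⟨c, ?_⟩
    ext i
    fin_cases i
    · simpa [mul_comm] using hc.symm
    · simpa [mul_comm] using hq.symm

end Koszul

namespace MvPolynomial

variable {σ R : Type*} [CommRing R]

lemma ker_aeval_zero : RingHom.ker (aeval (0 : σ → R)) = idealOfVars σ R := by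
  ext p
  rw [RingHom.mem_ker, aeval_zero, ← pow_one (idealOfVars σ R), mem_pow_idealOfVars_iff']
  simp [Finsupp.degree_eq_zero_iff, constantCoeff_eq]

variable (σ R) in
noncomputable def quotientIdealOfVarsAlgEquiv : (MvPolynomial σ R ⧸ idealOfVars σ R) ≃ₐ[R] R :=
  (Ideal.quotientEquivAlgOfEq R ker_aeval_zero.symm).trans
    (Ideal.quotientKerAlgEquivOfSurjective fun r => ⟨C r, by simp⟩)

lemma idealOfVars_fin_two : idealOfVars (Fin 2) R = Ideal.span {X 0, X 1} := by
  rw [idealOfVars]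
  congr 1
  ext
  simp [Fin.exists_fin_two, eq_comm]

end MvPolynomial

theorem stmt12 (k : Type*) [Field k] :
    Module.finrank k
      ((Module.Dual (MvPolynomial (Fin 2) k)
          (Module.Dual (MvPolynomial (Fin 2) k) (Mmod k))) ⧸
        LinearMap.range (Module.Dual.eval (MvPolynomial (Fin 2) k) (Mmod k))) = 1 := by
  have hx : IsLeftRegular (X 0 : MvPolynomial (Fin 2) k) :=
    (IsRegular.of_ne_zero (X_ne_zero 0)).left
  have hy (p : MvPolynomial (Fin 2) k) (h : X 0 ∣ X 1 * p) : X 0 ∣ p :=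
    (X_prime.dvd_or_dvd h).resolve_left (by simp)
  refine ((evalCokernelProdEquiv _ _ (bijective_toSpanSingleton_koszulForm hx hy)
    bijective_toSpanSingleton_id).restrictScalars k).finrank_eq.trans ?_
  rw [LinearMap.range_id, ((Submodule.prodTopQuotientEquiv _).restrictScalars k).finrank_eq,
    range_koszulForm, ← idealOfVars_fin_two,
    (quotientIdealOfVarsAlgEquiv (Fin 2) k).toLinearEquiv.finrank_eq, Module.finrank_self]
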